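/- Let ℓ ≥ 5 and let C = v₀v₁⋯v_{ℓ−1}v₀ be the cycle graph on ℓ vertices. Let L be a list assignment of C with |L(v_i)| ≥ 4 for every i, and suppose there is a color α ∈ L(v₀) \ L(v_{ℓ−1}). Then C admits a proper conflict-free L-coloring. -/
import Mathlib


/-- `φ` is a proper conflict-free coloring of `G`: it is a proper coloring and every
non-isolated vertex `v` has some color appearing on exactly one neighbor of `v`. -/
def IsPCFColoring {V : Type*} (G : SimpleGraph V) (φ : V → ℕ) : Prop :=
  (∀ ⦃a b : V⦄, G.Adj a b → φ a ≠ φ b) ∧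
  ∀ v : V, (G.neighborSet v).Nonempty →
    ∃ c : ℕ, ∃! w : V, w ∈ G.neighborSet v ∧ φ w = c

/-- Pick an element of `s \ t` (the minimum, if nonempty). -/
noncomputable def pcfPick (s t : Finset ℕ) : ℕ :=
  if h : (s \ t).Nonempty then (s \ t).min' h else 0

theorem pcfPick_mem {s t : Finset ℕ} (h : t.card < s.card) : pcfPick s t ∈ s \ t := by
  have hne : (s \ t).Nonempty := by
    rw [← Finset.card_pos]
    have := Finset.le_card_sdiff t s
    omega
  rw [pcfPick, dif_pos hne]
  exact Finset.min'_mem _ hne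

/-- Forbidden set for vertex `j` given the colors `a, b` of the two previous vertices. -/
def pcfF (ℓ α g1 j a b : ℕ) : Finset ℕ :=
  {a, b} ∪ (if j = ℓ - 1 then {g1} else if j = ℓ - 2 then {α} else ∅)

theorem pcfF_card (ℓ α g1 j a b : ℕ) : (pcfF ℓ α g1 j a b).card ≤ 3 := by
  unfold pcfF
  refine le_trans (Finset.card_union_le _ _) ?_
  have h1 : ({a, b} : Finset ℕ).card ≤ 2 :=
    le_trans (Finset.card_insert_le _ _) (by simp)
  have h2 : (if j = ℓ - 1 then ({g1} : Finset ℕ) else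
      if j = ℓ - 2 then ({α} : Finset ℕ) else ∅).card ≤ 1 := by
    split
    · simp
    · split <;> simp
  omega

/-- The greedy coloring sequence: `pcfSeq i = (color of vᵢ, color of v_{i+1})`. -/
noncomputable def pcfSeq (ℓ : ℕ) (L' : ℕ → Finset ℕ) (α g1 : ℕ) : ℕ → ℕ × ℕ
  | 0 => (α, g1)
  | i + 1 =>
    let p := pcfSeq ℓ L' α g1 i
    (p.2, pcfPick (L' (i + 2)) (pcfF ℓ α g1 (i + 2) p.1 p.2))

/-- The greedy coloring. -/
noncomputable def pcfG (ℓ : ℕ) (L' : ℕ → Finset ℕ) (α : ℕ) (i : ℕ) : ℕ :=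
  (pcfSeq ℓ L' α (pcfPick (L' 1) {α}) i).1

theorem pcfG_zero (ℓ : ℕ) (L' : ℕ → Finset ℕ) (α : ℕ) : pcfG ℓ L' α 0 = α := rfl

theorem pcfG_one (ℓ : ℕ) (L' : ℕ → Finset ℕ) (α : ℕ) :
    pcfG ℓ L' α 1 = pcfPick (L' 1) {α} := rfl

theorem pcfG_succ2 (ℓ : ℕ) (L' : ℕ → Finset ℕ) (α : ℕ) (i : ℕ) :
    pcfG ℓ L' α (i + 2) = pcfPick (L' (i + 2))
      (pcfF ℓ α (pcfG ℓ L' α 1) (i + 2) (pcfG ℓ L' α i) (pcfG ℓ L' α (i + 1))) := by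
  rfl

/-- Let `C = v₀v₁⋯v_{ℓ-1}v₀` be a cycle of length `ℓ ≥ 5` and `L` a list assignment
with lists of size at least `4`. If there is a color `α ∈ L(v₀) \ L(v_{ℓ-1})`, then
`C` admits a proper conflict-free `L`-coloring. Here the cycle graph on `Fin ℓ` has
`v_i = i`, so `v₀ = ⟨0, _⟩` and `v_{ℓ-1} = ⟨ℓ-1, _⟩`. -/
theorem cycle_pcf_of_list_difference (ℓ : ℕ) (hℓ : 5 ≤ ℓ)
    (L : Fin ℓ → Finset ℕ) (hL : ∀ v : Fin ℓ, 4 ≤ (L v).card)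
    (α : ℕ) (hα₀ : α ∈ L ⟨0, by omega⟩) (hα₁ : α ∉ L ⟨ℓ - 1, by omega⟩) :
    ∃ φ : Fin ℓ → ℕ,
      IsPCFColoring (SimpleGraph.cycleGraph ℓ) φ ∧ ∀ v : Fin ℓ, φ v ∈ L v := by
  have hℓ0 : 0 < ℓ := by omega
  set L' : ℕ → Finset ℕ := fun i => L ⟨i % ℓ, Nat.mod_lt i hℓ0⟩ with hL'def
  have hL' : ∀ (i : ℕ) (h : i < ℓ), L' i = L ⟨i, h⟩ := by
    intro i h
    simp only [hL'def]
    congr 1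
    exact Fin.ext (Nat.mod_eq_of_lt h)
  have hcard : ∀ i, 4 ≤ (L' i).card := fun i => hL _
  set g : ℕ → ℕ := pcfG ℓ L' α with hgdef
  have hg0 : g 0 = α := rfl
  have h1 : g 1 ∈ L' 1 \ {α} := by
    rw [hgdef, pcfG_one]
    exact pcfPick_mem (by have := hcard 1; simp only [Finset.card_singleton]; omega)
  have hspec : ∀ i, g (i + 2) ∈
      L' (i + 2) \ pcfF ℓ α (g 1) (i + 2) (g i) (g (i + 1)) := by
    intro i
    rw [hgdef, pcfG_succ2]
    exact pcfPick_mem (lt_of_le_of_lt (pcfF_card _ _ _ _ _ _) (by have := hcard (i + 2); omega))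
  have hmem : ∀ i, 0 < i → g i ∈ L' i := by
    intro i hi
    match i, hi with
    | 1, _ => exact (Finset.mem_sdiff.mp h1).1
    | (i + 2), _ => exact (Finset.mem_sdiff.mp (hspec i)).1
  have hnotF : ∀ i, g (i + 2) ∉ pcfF ℓ α (g 1) (i + 2) (g i) (g (i + 1)) :=
    fun i => (Finset.mem_sdiff.mp (hspec i)).2
  have hne1 : ∀ i, g (i + 1) ≠ g i := by
    intro i
    match i with
    | 0 =>
      intro h
      exact (Finset.mem_sdiff.mp h1).2 (by simp [h, hg0])
    | (i + 1) =>
      intro h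
      exact hnotF i (by rw [pcfF]; simp [h])
  have hne2 : ∀ i, g (i + 2) ≠ g i := by
    intro i h
    exact hnotF i (by rw [pcfF]; simp [h])
  have hα2 : g (ℓ - 2) ≠ α := by
    obtain ⟨k, hk⟩ : ∃ k, ℓ - 2 = k + 2 := ⟨ℓ - 4, by omega⟩
    rw [hk]
    intro h
    apply hnotF k
    rw [pcfF]
    apply Finset.mem_union_right
    rw [if_neg (by omega), if_pos (by omega)]
    simp [h]
  have hg1ne : g (ℓ - 1) ≠ g 1 := by
    obtain ⟨k, hk⟩ : ∃ k, ℓ - 1 = k + 2 := ⟨ℓ - 3, by omega⟩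
    rw [hk]
    intro h
    apply hnotF k
    rw [pcfF]
    apply Finset.mem_union_right
    rw [if_pos (by omega)]
    simp [h]
  have hαlast : g (ℓ - 1) ≠ α := by
    intro h
    apply hα₁
    have hm := hmem (ℓ - 1) (by omega)
    rw [hL' (ℓ - 1) (by omega)] at hm
    rwa [h] at hm
  -- mod arithmetic helper
  have hmodcase : ∀ x : ℕ, x < 2 * ℓ → x % ℓ = if x < ℓ then x else x - ℓ := by
    intro x hx
    split
    · exact Nat.mod_eq_of_lt ‹_›
    · rw [Nat.mod_eq_sub_mod (by omega), Nat.mod_eq_of_lt (by omega)]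
  haveI : NeZero ℓ := ⟨by omega⟩
  have hsubval : ∀ a b : Fin ℓ, (a - b).val = (ℓ - b.val + a.val) % ℓ := by
    intro a b
    rw [Fin.sub_def]
  have haddval : ∀ a b : Fin ℓ, (a + b).val = (a.val + b.val) % ℓ := by
    intro a b
    rw [Fin.add_def]
  have honeval : (1 : Fin ℓ).val = 1 := by
    have : (1 : Fin ℓ).val = 1 % ℓ := Fin.val_one' ℓ
    rw [this, Nat.mod_eq_of_lt (by omega)]
  -- the key adjacency fact
  have key : ∀ a b : Fin ℓ, (b - a).val = 1 → g a.val ≠ g b.val := by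
    intro a b h
    rw [hsubval] at h
    have hb := b.isLt
    have ha := a.isLt
    have h' := hmodcase (ℓ - a.val + b.val) (by omega)
    rw [h'] at h
    have : b.val = a.val + 1 ∨ (a.val = ℓ - 1 ∧ b.val = 0) := by
      split at h <;> omega
    rcases this with hc | ⟨hc1, hc2⟩
    · rw [hc]
      exact fun hh => hne1 a.val hh.symm
    · rw [hc1, hc2, hg0]
      exact hαlast
  refine ⟨fun v => g v.val, ⟨?_, ?_⟩, ?_⟩
  · -- proper
    intro a b hadj
    rw [SimpleGraph.cycleGraph_adj'] at hadj
    rcases hadj with h | h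
    · exact (key b a h).symm
    · exact key a b h
  · -- conflict-free
    intro v _
    obtain ⟨n, rfl⟩ : ∃ n, ℓ = n + 2 := ⟨ℓ - 2, by omega⟩
    have hnbr : ∀ w : Fin (n + 2),
        w ∈ (SimpleGraph.cycleGraph (n + 2)).neighborSet v ↔ (w = v - 1 ∨ w = v + 1) := by
      intro w
      rw [SimpleGraph.cycleGraph_neighborSet]
      simp [Set.mem_insert_iff]
    -- values of neighbours
    have hv := v.isLt
    have hm1 : (v - 1).val = if v.val = 0 then n + 1 else v.val - 1 := by
      rw [hsubval, honeval, hmodcase _ (by omega)]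
      split <;> split <;> omega
    have hp1 : (v + 1).val = if v.val = n + 1 then 0 else v.val + 1 := by
      rw [haddval, honeval, hmodcase _ (by omega)]
      split <;> split <;> omega
    have hneq : g ((v - 1).val) ≠ g ((v + 1).val) := by
      rw [hm1, hp1]
      rcases Nat.eq_zero_or_pos v.val with h0 | hpos
      · rw [if_pos h0, if_neg (by omega)]
        rw [h0]
        have : n + 1 = (n + 2) - 1 := by omega
        rw [this]
        simpa using hg1ne
      · rw [if_neg (by omega)]
        rcases eq_or_ne v.val (n + 1) with he | he
        · rw [if_pos he, he]
          have : n + 1 - 1 = (n + 2) - 2 := by omega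
          rw [this]
          simpa [hg0] using hα2
        · rw [if_neg he]
          have h2 := hne2 (v.val - 1)
          have hrw : v.val - 1 + 2 = v.val + 1 := by omega
          rw [hrw] at h2
          exact fun hh => h2 hh.symm
    have hm1p1 : v - 1 ≠ v + 1 := by
      intro h
      have := congrArg Fin.val h
      rw [hm1, hp1] at this
      split at this <;> split at this <;> omega
    refine ⟨g ((v + 1).val), ⟨v + 1, ⟨(hnbr _).mpr (Or.inr rfl), rfl⟩, ?_⟩⟩
    rintro w ⟨hw, hwc⟩
    rcases (hnbr w).mp hw with h | h
    · exact absurd (h ▸ hwc) hneq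
    · exact h
  · -- list membership
    intro v
    rcases Nat.eq_zero_or_pos v.val with h0 | hpos
    · have hv0 : v = ⟨0, by omega⟩ := Fin.ext h0
      rw [hv0]
      simpa [hg0] using hα₀
    · have := hmem v.val hpos
      rw [hL' v.val v.isLt] at this
      simpa using this
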